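/- Let n ≥ 2 and let (x_0, ..., x_n) be a symmetrically stretched knot sequence on [a,b]. Suppose τ_1, ..., τ_{n+1} ∈ [a,b] are nodes and ω_1, ..., ω_{n+1} > 0 are weights such that ∫_a^b f(t) dt = Σ_{i=1}^{n+1} ω_i f(τ_i) for every f ∈ S^n_{3,1}. Then for each k = 1, ..., ⌊n/2⌋ the open interval (x_{k-1}, x_k) contains at least one of the nodes τ_i. -/

import Mathlib

/-- `x 0, …, x n` is a symmetrically stretched knot sequence on `[a, b]`:
`x 0 = a`, `x n = b`, the knots are strictly increasing, the sequence is symmetric with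
respect to the midpoint of `[a, b]`, and `x k - 2 x (k+1) + x (k+2) ≥ 0` for
`k = 0, …, ⌊n/2⌋ - 1`. -/
def SymStretched (n : ℕ) (a b : ℝ) (x : ℕ → ℝ) : Prop :=
  x 0 = a ∧ x n = b ∧ (∀ k, k < n → x k < x (k + 1)) ∧
    (∀ k, k ≤ n → x k + x (n - k) = a + b) ∧
    (∀ k, k < n / 2 → x k - 2 * x (k + 1) + x (k + 2) ≥ 0)

/-- `f` belongs to `S^n_{3,1}`: it is `C¹` on `[x 0, x n]` and agrees on each open knot
interval `(x k, x (k+1))` with a polynomial of degree at most `3`. -/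
def IsSpline31 (n : ℕ) (x : ℕ → ℝ) (f : ℝ → ℝ) : Prop :=
  ContDiffOn ℝ 1 f (Set.Icc (x 0) (x n)) ∧
    ∀ k, k < n → ∃ p : Polynomial ℝ, p.degree ≤ 3 ∧
      ∀ t ∈ Set.Ioo (x k) (x (k + 1)), f t = p.eval t

open Set

lemma glue_hasDerivAt {f₁ f₂ f₁' f₂' : ℝ → ℝ} {d : ℝ}
    (h₁ : ∀ t, HasDerivAt f₁ (f₁' t) t) (h₂ : ∀ t, HasDerivAt f₂ (f₂' t) t)
    (hv : f₁ d = f₂ d) (hd : f₁' d = f₂' d) (t : ℝ) :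
    HasDerivAt (fun s => if s ≤ d then f₁ s else f₂ s)
      (if t ≤ d then f₁' t else f₂' t) t := by
  rcases lt_trichotomy t d with h | heq | h
  · rw [if_pos h.le]
    apply (h₁ t).congr_of_eventuallyEq
    filter_upwards [Iio_mem_nhds h] with s hs
    rw [if_pos (le_of_lt hs)]
  · subst heq
    rw [if_pos le_rfl]
    have hle : HasDerivWithinAt (fun s => if s ≤ t then f₁ s else f₂ s) (f₁' t) (Set.Iic t) t := by
      apply ((h₁ t).hasDerivWithinAt).congr
      · intro s hs; exact if_pos hs
      · exact if_pos le_rfl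
    have hge : HasDerivWithinAt (fun s => if s ≤ t then f₁ s else f₂ s) (f₁' t) (Set.Ici t) t := by
      rw [hd]
      apply ((h₂ t).hasDerivWithinAt).congr
      · intro s hs
        rcases eq_or_lt_of_le (Set.mem_Ici.mp hs) with rfl | hlt
        · rw [if_pos le_rfl]; exact hv
        · exact if_neg (not_le.mpr hlt)
      · rw [if_pos le_rfl]; exact hv
    have h3 := hle.union hge
    rwa [Set.Iic_union_Ici, hasDerivWithinAt_univ] at h3
  · rw [if_neg (not_le.mpr h)]
    apply (h₂ t).congr_of_eventuallyEq
    filter_upwards [Ioi_mem_nhds h] with s hs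
    rw [if_neg (not_le.mpr hs)]

lemma integral_bumpL (c d : ℝ) :
    (∫ t in c..d, (t - c)^2 * (t - d)) = -(d - c)^4 / 12 := by
  have h : ∀ t : ℝ, HasDerivAt (fun s => (s - c)^4/4 - (d - c)*(s - c)^3/3)
      ((t - c)^2 * (t - d)) t := by
    intro t
    have h0 : HasDerivAt (fun s : ℝ => s - c) 1 t := (hasDerivAt_id t).sub_const c
    have h4 := (h0.fun_pow 4).div_const 4
    have h3 := ((h0.fun_pow 3).const_mul (d - c)).div_const 3
    refine (h4.fun_sub h3).congr_deriv ?_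
    push_cast
    ring
  rw [intervalIntegral.integral_eq_sub_of_hasDerivAt (fun t _ => h t)
    (by apply Continuous.intervalIntegrable; continuity)]
  ring

lemma integral_bumpR (d e : ℝ) :
    (∫ t in d..e, (e - t)^2 * (t - d)) = (e - d)^4 / 12 := by
  have h : ∀ t : ℝ, HasDerivAt (fun s => (s - e)^4/4 + (e - d)*(s - e)^3/3)
      ((e - t)^2 * (t - d)) t := by
    intro t
    have h0 : HasDerivAt (fun s : ℝ => s - e) 1 t := (hasDerivAt_id t).sub_const e
    have h4 := (h0.fun_pow 4).div_const 4
    have h3 := ((h0.fun_pow 3).const_mul (e - d)).div_const 3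
    refine (h4.fun_add h3).congr_deriv ?_
    push_cast
    ring
  rw [intervalIntegral.integral_eq_sub_of_hasDerivAt (fun t _ => h t)
    (by apply Continuous.intervalIntegrable; continuity)]
  ring

/-- The step bump: `0` left of `c`, `(e-d)²(t-c)²(t-d)` on `[c,d]`,
`(d-c)²(e-t)²(t-d)` on `[d,e]`, `0` right of `e`. -/
noncomputable def bumpF (c d e : ℝ) : ℝ → ℝ := fun t =>
  if t ≤ d then (if t ≤ c then 0 else (e-d)^2*((t-c)^2*(t-d)))
  else (if t ≤ e then (d-c)^2*((e-t)^2*(t-d)) else 0)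

noncomputable def bumpF' (c d e : ℝ) : ℝ → ℝ := fun t =>
  if t ≤ d then (if t ≤ c then 0 else (e-d)^2*(2*(t-c)*(t-d)+(t-c)^2))
  else (if t ≤ e then (d-c)^2*(-2*(e-t)*(t-d)+(e-t)^2) else 0)

lemma bumpQ_hasDeriv (c d e : ℝ) (t : ℝ) :
    HasDerivAt (fun s => (e-d)^2*((s-c)^2*(s-d)))
      ((e-d)^2*(2*(t-c)*(t-d)+(t-c)^2)) t := by
  have h0 : HasDerivAt (fun s : ℝ => s - c) 1 t := (hasDerivAt_id t).sub_const c
  have h1 : HasDerivAt (fun s : ℝ => s - d) 1 t := (hasDerivAt_id t).sub_const d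
  have := (((h0.fun_pow 2).fun_mul h1).const_mul ((e-d)^2))
  refine this.congr_deriv ?_
  push_cast
  ring

lemma bumpP_hasDeriv (c d e : ℝ) (t : ℝ) :
    HasDerivAt (fun s => (d-c)^2*((e-s)^2*(s-d)))
      ((d-c)^2*(-2*(e-t)*(t-d)+(e-t)^2)) t := by
  have h0 : HasDerivAt (fun s : ℝ => e - s) (-1) t := by
    simpa using (hasDerivAt_id t).const_sub e
  have h1 : HasDerivAt (fun s : ℝ => s - d) 1 t := (hasDerivAt_id t).sub_const d
  have := (((h0.fun_pow 2).fun_mul h1).const_mul ((d-c)^2))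
  refine this.congr_deriv ?_
  push_cast
  ring

lemma bumpF_hasDeriv (c d e : ℝ) (hcd : c < d) (hde : d < e) (t : ℝ) :
    HasDerivAt (bumpF c d e) (bumpF' c d e t) t := by
  have hL : ∀ t : ℝ, HasDerivAt (fun s => if s ≤ c then (0:ℝ) else (e-d)^2*((s-c)^2*(s-d)))
      (if t ≤ c then (0:ℝ) else (e-d)^2*(2*(t-c)*(t-d)+(t-c)^2)) t := by
    intro t
    exact glue_hasDerivAt (f₁' := fun _ => (0:ℝ)) (fun t => hasDerivAt_const t 0)
      (bumpQ_hasDeriv c d e) (by ring) (by ring) t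
  have hR : ∀ t : ℝ, HasDerivAt (fun s => if s ≤ e then (d-c)^2*((e-s)^2*(s-d)) else (0:ℝ))
      (if t ≤ e then (d-c)^2*(-2*(e-t)*(t-d)+(e-t)^2) else (0:ℝ)) t := by
    intro t
    exact glue_hasDerivAt (bumpP_hasDeriv c d e)
      (f₂' := fun _ => (0:ℝ)) (fun t => hasDerivAt_const t 0) (by ring) (by ring) t
  have := glue_hasDerivAt (d := d) hL hR
    (by rw [if_neg (not_le.mpr hcd), if_pos hde.le]; ring)
    (by rw [if_neg (not_le.mpr hcd), if_pos hde.le]; ring) t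
  exact this

lemma bumpF'_continuous (c d e : ℝ) (hcd : c < d) (hde : d < e) :
    Continuous (bumpF' c d e) := by
  unfold bumpF'
  apply Continuous.if_le
  · apply Continuous.if_le
    · exact continuous_const
    · fun_prop
    · exact continuous_id
    · exact continuous_const
    · rintro x rfl; ring
  · apply Continuous.if_le
    · fun_prop
    · exact continuous_const
    · exact continuous_id
    · exact continuous_const
    · rintro x rfl; ring
  · exact continuous_id
  · exact continuous_const
  · rintro x rfl
    rw [if_neg (not_le.mpr hcd), if_pos hde.le]
    ring

lemma bumpF_contDiff (c d e : ℝ) (hcd : c < d) (hde : d < e) :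
    ContDiff ℝ 1 (bumpF c d e) := by
  rw [contDiff_one_iff_deriv]
  refine ⟨fun t => (bumpF_hasDeriv c d e hcd hde t).differentiableAt, ?_⟩
  have : deriv (bumpF c d e) = bumpF' c d e :=
    funext fun t => (bumpF_hasDeriv c d e hcd hde t).deriv
  rw [this]
  exact bumpF'_continuous c d e hcd hde

lemma bumpF_eq_left (c d e : ℝ) (t : ℝ) (ht : t ≤ c) (hcd : c < d) : bumpF c d e t = 0 := by
  unfold bumpF
  rw [if_pos (ht.trans hcd.le), if_pos ht]

lemma bumpF_eq_Q (c d e : ℝ) (t : ℝ) (ht : t ∈ Set.Icc c d) :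
    bumpF c d e t = (e-d)^2*((t-c)^2*(t-d)) := by
  unfold bumpF
  rw [if_pos ht.2]
  rcases eq_or_lt_of_le ht.1 with rfl | h
  · rw [if_pos le_rfl]; ring
  · rw [if_neg (not_le.mpr h)]

lemma bumpF_eq_P (c d e : ℝ) (t : ℝ) (ht : t ∈ Set.Icc d e) (hcd : c < d) :
    bumpF c d e t = (d-c)^2*((e-t)^2*(t-d)) := by
  unfold bumpF
  rcases eq_or_lt_of_le ht.1 with rfl | h
  · rw [if_pos le_rfl, if_neg (not_le.mpr hcd)]; ring
  · rw [if_neg (not_le.mpr h), if_pos ht.2]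

lemma bumpF_eq_right (c d e : ℝ) (t : ℝ) (ht : e ≤ t) (hcd : c < d) (hde : d < e) :
    bumpF c d e t = 0 := by
  unfold bumpF
  rcases eq_or_lt_of_le ht with rfl | h
  · rw [if_neg (not_le.mpr hde), if_pos le_rfl]; ring
  · rw [if_neg (not_le.mpr (hde.trans h)), if_neg (not_le.mpr h)]

lemma bumpF_nonpos (c d e : ℝ) (hcd : c < d) (hde : d < e) (t : ℝ)
    (ht : t ∉ Set.Ioo d e) : bumpF c d e t ≤ 0 := by
  rcases le_or_gt t c with h | h
  · rw [bumpF_eq_left c d e t h hcd]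
  · rcases le_or_gt t d with h2 | h2
    · rw [bumpF_eq_Q c d e t ⟨h.le, h2⟩]
      have h5 : 0 ≤ (e-d)^2*(t-c)^2*(d-t) :=
        mul_nonneg (mul_nonneg (sq_nonneg _) (sq_nonneg _)) (by linarith)
      nlinarith [h5]
    · have : e ≤ t := by
        by_contra h3
        exact ht ⟨h2, not_le.mp h3⟩
      rw [bumpF_eq_right c d e t this hcd hde]

lemma bumpF_neg (c d e : ℝ) (hcd : c < d) (hde : d < e) (t : ℝ)
    (ht : t ∈ Set.Ioo c d) : bumpF c d e t < 0 := by
  rw [bumpF_eq_Q c d e t ⟨ht.1.le, ht.2.le⟩]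
  have h5 : 0 < (e-d)^2*(t-c)^2*(d-t) :=
    mul_pos (mul_pos (pow_pos (by linarith [ht.2]) 2) (pow_pos (by linarith [ht.1]) 2))
      (by linarith [ht.2])
  nlinarith [h5]

lemma bumpF_integral (c d e A B : ℝ) (hcd : c < d) (hde : d < e)
    (hA : A ≤ c) (hB : e ≤ B) :
    (∫ t in A..B, bumpF c d e t)
      = (e-d)^2 * (-(d-c)^4/12) + (d-c)^2 * ((e-d)^4/12) := by
  have hcont : Continuous (bumpF c d e) :=
    (bumpF_contDiff c d e hcd hde).continuous
  have hint : ∀ u v : ℝ, IntervalIntegrable (bumpF c d e) MeasureTheory.volume u v :=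
    fun u v => hcont.intervalIntegrable u v
  have h1 : (∫ t in A..c, bumpF c d e t) = 0 := by
    rw [intervalIntegral.integral_congr (g := fun _ => (0:ℝ)), intervalIntegral.integral_zero]
    intro t ht
    rw [Set.uIcc_of_le (hA.trans (le_refl c)) ] at ht
    exact bumpF_eq_left c d e t ht.2 hcd
  have h2 : (∫ t in c..d, bumpF c d e t) = (e-d)^2 * (-(d-c)^4/12) := by
    rw [intervalIntegral.integral_congr (g := fun t => (e-d)^2*((t-c)^2*(t-d)))]
    · rw [intervalIntegral.integral_const_mul, integral_bumpL]
    · intro t ht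
      rw [Set.uIcc_of_le hcd.le] at ht
      exact bumpF_eq_Q c d e t ht
  have h3 : (∫ t in d..e, bumpF c d e t) = (d-c)^2 * ((e-d)^4/12) := by
    rw [intervalIntegral.integral_congr (g := fun t => (d-c)^2*((e-t)^2*(t-d)))]
    · rw [intervalIntegral.integral_const_mul, integral_bumpR]
    · intro t ht
      rw [Set.uIcc_of_le hde.le] at ht
      exact bumpF_eq_P c d e t ht hcd
  have h4 : (∫ t in e..B, bumpF c d e t) = 0 := by
    rw [intervalIntegral.integral_congr (g := fun _ => (0:ℝ)), intervalIntegral.integral_zero]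
    intro t ht
    rw [Set.uIcc_of_le hB] at ht
    exact bumpF_eq_right c d e t ht.1 hcd hde
  have e1 := intervalIntegral.integral_add_adjacent_intervals (hint A c) (hint c d)
  have e2 := intervalIntegral.integral_add_adjacent_intervals (hint A d) (hint d e)
  have e3 := intervalIntegral.integral_add_adjacent_intervals (hint A e) (hint e B)
  rw [← e3, ← e2, ← e1, h1, h2, h3, h4]
  ring

/-- The boundary bump: `(d-t)²(t-a)` on `(-∞, d]`, `0` right of `d`. -/
noncomputable def bumpB (a d : ℝ) : ℝ → ℝ := fun t =>
  if t ≤ d then (d-t)^2*(t-a) else 0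

noncomputable def bumpB' (a d : ℝ) : ℝ → ℝ := fun t =>
  if t ≤ d then -2*(d-t)*(t-a)+(d-t)^2 else 0

lemma bumpB_hasDeriv (a d : ℝ) (t : ℝ) :
    HasDerivAt (bumpB a d) (bumpB' a d t) t := by
  have hP : ∀ t : ℝ, HasDerivAt (fun s => (d-s)^2*(s-a)) (-2*(d-t)*(t-a)+(d-t)^2) t := by
    intro t
    have h0 : HasDerivAt (fun s : ℝ => d - s) (-1) t := by
      simpa using (hasDerivAt_id t).const_sub d
    have h1 : HasDerivAt (fun s : ℝ => s - a) 1 t := (hasDerivAt_id t).sub_const a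
    have := (h0.fun_pow 2).fun_mul h1
    refine this.congr_deriv ?_
    push_cast
    ring
  exact glue_hasDerivAt hP (f₂' := fun _ => (0:ℝ)) (fun t => hasDerivAt_const t 0)
    (by ring) (by ring) t

lemma bumpB_contDiff (a d : ℝ) : ContDiff ℝ 1 (bumpB a d) := by
  rw [contDiff_one_iff_deriv]
  refine ⟨fun t => (bumpB_hasDeriv a d t).differentiableAt, ?_⟩
  have : deriv (bumpB a d) = bumpB' a d :=
    funext fun t => (bumpB_hasDeriv a d t).deriv
  rw [this]
  unfold bumpB'
  apply Continuous.if_le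
  · fun_prop
  · exact continuous_const
  · exact continuous_id
  · exact continuous_const
  · rintro x rfl; ring

lemma bumpB_eq_P (a d : ℝ) (t : ℝ) (ht : t ≤ d) : bumpB a d t = (d-t)^2*(t-a) := by
  unfold bumpB; rw [if_pos ht]

lemma bumpB_eq_right (a d : ℝ) (t : ℝ) (ht : d ≤ t) : bumpB a d t = 0 := by
  unfold bumpB
  rcases eq_or_lt_of_le ht with rfl | h
  · rw [if_pos le_rfl]; ring
  · rw [if_neg (not_le.mpr h)]

lemma bumpB_zero (a d : ℝ) (t : ℝ) (hat : a ≤ t) (ht : t ∉ Set.Ioo a d) :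
    bumpB a d t = 0 := by
  rcases le_or_gt d t with h | h
  · exact bumpB_eq_right a d t h
  · rw [bumpB_eq_P a d t h.le]
    have : t = a := by
      by_contra h2
      exact ht ⟨lt_of_le_of_ne hat (Ne.symm h2), h⟩
    rw [this]; ring

lemma bumpB_integral (a d B : ℝ) (had : a < d) (hB : d ≤ B) :
    (∫ t in a..B, bumpB a d t) = (d-a)^4/12 := by
  have hcont : Continuous (bumpB a d) := (bumpB_contDiff a d).continuous
  have h2 : (∫ t in a..d, bumpB a d t) = (d-a)^4/12 := by
    rw [intervalIntegral.integral_congr (g := fun t => (d-t)^2*(t-a))]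
    · exact integral_bumpR a d
    · intro t ht
      rw [Set.uIcc_of_le had.le] at ht
      exact bumpB_eq_P a d t ht.2
  have h4 : (∫ t in d..B, bumpB a d t) = 0 := by
    rw [intervalIntegral.integral_congr (g := fun _ => (0:ℝ)), intervalIntegral.integral_zero]
    intro t ht
    rw [Set.uIcc_of_le hB] at ht
    exact bumpB_eq_right a d t ht.1
  have hint : ∀ u v : ℝ, IntervalIntegrable (bumpB a d) MeasureTheory.volume u v :=
    fun u v => hcont.intervalIntegrable u v
  have e1 := intervalIntegral.integral_add_adjacent_intervals (hint a d) (hint d B)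
  rw [← e1, h2, h4, add_zero]

open Polynomial in
lemma cubic_poly (A c d : ℝ) : ∃ p : Polynomial ℝ, p.degree ≤ 3 ∧
    ∀ t : ℝ, p.eval t = A*((t-c)^2*(t-d)) := by
  refine ⟨C A * ((X - C c)^2*(X - C d)), ?_, fun t => by simp⟩
  compute_degree


/-- Lemma 2 of the paper: every quadrature rule with positive weights that is exact on
`S^n_{3,1}` for a symmetrically stretched knot sequence has at least one node in each of
the intervals `(x_{k-1}, x_k)`, `k = 1, …, ⌊n/2⌋`. -/
theorem stmt5 (n : ℕ) (hn : 2 ≤ n) (a b : ℝ) (x : ℕ → ℝ)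
    (hx : SymStretched n a b x)
    (τ ω : ℕ → ℝ)
    (hτ : ∀ i ∈ Finset.Icc 1 (n + 1), τ i ∈ Set.Icc a b)
    (hω : ∀ i ∈ Finset.Icc 1 (n + 1), 0 < ω i)
    (hexact : ∀ f : ℝ → ℝ, IsSpline31 n x f →
      (∫ t in a..b, f t) = ∑ i ∈ Finset.Icc 1 (n + 1), ω i * f (τ i)) :
    ∀ k, 1 ≤ k → k ≤ n / 2 →
      ∃ i ∈ Finset.Icc 1 (n + 1), τ i ∈ Set.Ioo (x (k - 1)) (x k) := by
  obtain ⟨hx0, hxn, hlt, hsym, hconv⟩ := hx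
  have hd2n : n / 2 ≤ n := Nat.div_le_self n 2
  have hmono : ∀ i j : ℕ, i ≤ j → j ≤ n → x i ≤ x j := by
    intro i j hij hjn
    induction j, hij using Nat.le_induction with
    | base => exact le_rfl
    | succ m hm ih => exact le_trans (ih (by omega)) (hlt m (by omega)).le
  intro k
  induction k with
  | zero => intro h1; exact absurd h1 (by omega)
  | succ m ih =>
    intro _ hk
    by_contra hno
    push_neg at hno
    simp only [Nat.add_sub_cancel] at hno
    -- hno : ∀ i ∈ Finset.Icc 1 (n+1), τ i ∉ Set.Ioo (x m) (x (m+1))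
    rcases Nat.eq_zero_or_pos m with rfl | hm
    · -- base case: interval (x 0, x 1) = (a, x 1)
      set d := x 1 with hd
      have had : a < d := hx0 ▸ hlt 0 (by omega)
      have hdb : d ≤ b := hxn ▸ hmono 1 n (by omega) le_rfl
      have hspline : IsSpline31 n x (bumpB a d) := by
        constructor
        · exact (bumpB_contDiff a d).contDiffOn
        · intro k hkn
          rcases Nat.eq_zero_or_pos k with rfl | hk1
          · obtain ⟨p, hp3, hpe⟩ := cubic_poly 1 d a
            refine ⟨p, hp3, fun t ht => ?_⟩
            rw [hpe t, bumpB_eq_P a d t ht.2.le]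
            ring
          · refine ⟨0, by simp, fun t ht => ?_⟩
            rw [Polynomial.eval_zero]
            exact bumpB_eq_right a d t (le_trans (hmono 1 k hk1 (by omega)) ht.1.le)
      have hint := hexact _ hspline
      rw [bumpB_integral a d b had hdb] at hint
      have hz : ∀ i ∈ Finset.Icc 1 (n+1), ω i * bumpB a d (τ i) = 0 := by
        intro i hi
        rw [bumpB_zero a d (τ i) (hτ i hi).1 (by rw [hd, ← hx0]; exact hno i hi), mul_zero]
      rw [Finset.sum_eq_zero hz] at hint
      have := pow_pos (sub_pos.2 had) 4
      linarith
    · -- step case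
      obtain ⟨j, rfl⟩ : ∃ j, m = j + 1 := ⟨m - 1, by omega⟩
      set c := x j with hc
      set d := x (j+1) with hd
      set e := x (j+2) with he
      have hjn : j + 2 ≤ n := le_trans hk hd2n
      have hcd : c < d := hlt j (by omega)
      have hde : d < e := hlt (j+1) (by omega)
      have hac : a ≤ c := hx0 ▸ hmono 0 j (by omega) (by omega)
      have heb : e ≤ b := hxn ▸ hmono (j+2) n hjn le_rfl
      have hstretch : d - c ≤ e - d := by
        have := hconv j (by omega)
        simp only [← hc, ← hd, ← he] at this
        linarith
      -- previous interval contains a node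
      obtain ⟨i0, hi0mem, hi0⟩ := ih (by omega) (by omega)
      simp only [Nat.add_sub_cancel] at hi0
      -- hi0 : τ i0 ∈ Set.Ioo (x j) (x (j+1))
      have hspline : IsSpline31 n x (bumpF c d e) := by
        constructor
        · exact (bumpF_contDiff c d e hcd hde).contDiffOn
        · intro k hkn
          rcases Nat.lt_or_ge k j with h | h
          · refine ⟨0, by simp, fun t ht => ?_⟩
            rw [Polynomial.eval_zero]
            exact bumpF_eq_left c d e t
              (le_trans ht.2.le (hmono (k+1) j h (by omega))) hcd
          rcases Nat.eq_or_lt_of_le h with rfl | h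
          · obtain ⟨p, hp3, hpe⟩ := cubic_poly ((e-d)^2) c d
            refine ⟨p, hp3, fun t ht => ?_⟩
            rw [hpe t, bumpF_eq_Q c d e t ⟨ht.1.le, ht.2.le⟩]
          rcases Nat.eq_or_lt_of_le h with h2 | h2
          · obtain ⟨p, hp3, hpe⟩ := cubic_poly ((d-c)^2) e d
            refine ⟨p, hp3, fun t ht => ?_⟩
            rw [← h2] at ht
            rw [hpe t, bumpF_eq_P c d e t ⟨ht.1.le, ht.2.le⟩ hcd]
            ring
          · refine ⟨0, by simp, fun t ht => ?_⟩
            rw [Polynomial.eval_zero]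
            exact bumpF_eq_right c d e t
              (le_trans (hmono (j+2) k h2 (by omega)) ht.1.le) hcd hde
      have hint := hexact _ hspline
      rw [bumpF_integral c d e a b hcd hde hac heb] at hint
      -- the integral is nonnegative
      have hsq : (d-c)^2 ≤ (e-d)^2 := by nlinarith
      have hkey : 0 ≤ (d-c)^2*(e-d)^2*((e-d)^2-(d-c)^2) :=
        mul_nonneg (mul_nonneg (sq_nonneg _) (sq_nonneg _)) (by linarith)
      have hInt0 : 0 ≤ (e-d)^2 * (-(d-c)^4/12) + (d-c)^2 * ((e-d)^4/12) := by
        nlinarith [hkey]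
      -- the sum is negative
      have hsum : (∑ i ∈ Finset.Icc 1 (n+1), ω i * bumpF c d e (τ i)) < 0 := by
        have := Finset.sum_lt_sum (f := fun i => ω i * bumpF c d e (τ i))
          (g := fun _ => (0:ℝ)) (s := Finset.Icc 1 (n+1))
          (fun i hi => mul_nonpos_iff.mpr (Or.inl
            ⟨(hω i hi).le, bumpF_nonpos c d e hcd hde (τ i) (hno i hi)⟩))
          ⟨i0, hi0mem, mul_neg_of_pos_of_neg (hω i0 hi0mem)
            (bumpF_neg c d e hcd hde (τ i0) hi0)⟩
        simpa using this
      linarith
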